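/- (One-step contraction) Let f : ℝ^n → ℝ be differentiable, convex, coordinate-wise smooth with parameters (L_1,…,L_n) (each L_i > 0), and σ_β-strongly convex with respect to ‖·‖_{L_β} for some β ∈ [0,1] and σ_β > 0. Let x* be a minimizer of f. Set α := (1−β)/2, S_α := Σ_i L_i^α, p_i := L_i^α/S_α, τ := 2/(1 + √(4S_α²/σ_β + 1)), and η := 1/(τ·S_α²). Fix y_k, z_k ∈ ℝ^n, let x_{k+1} := τ·z_k + (1−τ)·y_k, and for each i define y^{(i)} := x_{k+1} − (1/L_i)·∇_i f(x_{k+1})·e_i and z^{(i)} := (1/(1+ησ_β))·(z_k + ησ_β·x_{k+1} − (η/(p_i·L_i^β))·∇_i f(x_{k+1})·e_i). Then: Σ_{i=1}^n p_i·[ (f(y^{(i)}) − f(x*)) + (τ/(2η(1−τ)))·‖z^{(i)} − x*‖²_{L_β} ] ≤ (1−τ)·[ (f(y_k) − f(x*)) + (τ/(2η(1−τ)))·‖z_k − x*‖²_{L_β} ]. -/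

import Mathlib

/-- The i-th standard basis vector of ℝ^n. -/
def basisVec {n : ℕ} (i : Fin n) : Fin n → ℝ := Pi.single i 1

/-- The i-th partial derivative ∇_i f(x). -/
noncomputable def coordGrad {n : ℕ} (f : (Fin n → ℝ) → ℝ) (x : Fin n → ℝ) (i : Fin n) : ℝ :=
  fderiv ℝ f x (basisVec i)

/-- f is coordinate-wise smooth with parameters (L_1, …, L_n):
`|∇_i f(x + δ e_i) − ∇_i f(x)| ≤ L_i |δ|` for all x, δ, i. -/
def CoordSmooth {n : ℕ} (f : (Fin n → ℝ) → ℝ) (L : Fin n → ℝ) : Prop :=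
  ∀ (x : Fin n → ℝ) (δ : ℝ) (i : Fin n),
    |coordGrad f (x + δ • basisVec i) i - coordGrad f x i| ≤ L i * |δ|

/-- Weighted squared norm ‖v‖²_{L_β} := Σ_i L_i^β · v_i². -/
noncomputable def wnormSq {n : ℕ} (L : Fin n → ℝ) (β : ℝ) (v : Fin n → ℝ) : ℝ :=
  ∑ i, L i ^ β * v i ^ 2

/-- f is σ-strongly convex with respect to the weighted norm ‖·‖_{L_β}:
`f(y) ≥ f(x) + ⟨∇f(x), y − x⟩ + (σ/2)‖y − x‖²_{L_β}` for all x, y. -/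
def StronglyConvexW {n : ℕ} (f : (Fin n → ℝ) → ℝ) (L : Fin n → ℝ) (β σ : ℝ) : Prop :=
  ∀ x y : Fin n → ℝ,
    f x + (∑ i, coordGrad f x i * (y i - x i)) + σ / 2 * wnormSq L β (y - x) ≤ f y

/-!
Write `x = τ z + (1 - τ) y`, `g = ∇f(x)` and `S = S_α`. Coordinate-wise smoothness makes the
gradient step in coordinate `i` decrease `f` by `g_i² / (2 L_i)`, so on average
`f(y⁺) ≤ f(x) - Σ p_i g_i² / (2 L_i)`. Since `1 / (1 + ησ) = 1 - τ`, the mirror step is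
`z⁺ - x* = (1 - τ)(z - x*) + τ(x - x*) - ((1 - τ) η g_i / (p_i L_i^β)) e_i`, whose expected squared
norm is an exact quadratic identity. Convexity between `x` and `y`, strong convexity between `x`
and `x*` and the coupling `τ (z - x) + (1 - τ)(y - x) = 0` then leave the cross term `τ ⟨g, z - x⟩`,
which the descent term absorbs by Young's inequality in each coordinate. Both this and the exact
identity use `τ η L_i = p_i² L_i^β`, which is what `p_i ∝ L_i^((1-β)/2)` and `η = 1 / (τ S²)` give,
while the formula for `τ` solves `σ (1 - τ) = τ² S²`, i.e. `η σ (1 - τ) = τ`.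
-/

open Finset Set

lemma le_add_mul_add_sq_of_abs_deriv_sub_le {g g' : ℝ → ℝ} {C : ℝ}
    (hg : ∀ t, HasDerivAt g (g' t) t) (hg' : ∀ u, |g' u - g' 0| ≤ C * |u|) (t : ℝ) :
    g t ≤ g 0 + g' 0 * t + C / 2 * t ^ 2 := by
  set h : ℝ → ℝ := fun u => g 0 + g' 0 * u + C / 2 * u ^ 2 - g u
  have hh : ∀ u, HasDerivAt h (g' 0 + C * u - g' u) u := fun u => by
    refine HasDerivAt.sub ?_ (hg u)
    exact ((((hasDerivAt_id u).const_mul (g' 0)).const_add (g 0)).add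
      ((hasDerivAt_pow 2 u).const_mul (C / 2))).congr_deriv (by push_cast; ring)
  have hcont : Continuous h := continuous_iff_continuousAt.2 fun u => (hh u).continuousAt
  have h0 : h 0 = 0 := by simp [h]
  suffices 0 ≤ h t by simp only [h] at this; linarith
  rcases le_total 0 t with ht | ht
  · have hmono : MonotoneOn h (Ici 0) := by
      refine monotoneOn_of_hasDerivWithinAt_nonneg (convex_Ici 0) hcont.continuousOn
        (fun u _ => (hh u).hasDerivWithinAt) fun u hu => ?_
      rw [interior_Ici, Set.mem_Ioi] at hu
      have := (abs_le.1 ((hg' u).trans_eq (by rw [abs_of_pos hu]))).2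
      linarith
    simpa [h0] using hmono self_mem_Ici ht ht
  · have hanti : AntitoneOn h (Iic 0) := by
      refine antitoneOn_of_hasDerivWithinAt_nonpos (convex_Iic 0) hcont.continuousOn
        (fun u _ => (hh u).hasDerivWithinAt) fun u hu => ?_
      rw [interior_Iic, Set.mem_Iio] at hu
      have := (abs_le.1 ((hg' u).trans_eq (by rw [abs_of_neg hu]))).1
      linarith
    simpa [h0] using hanti ht self_mem_Iic ht

variable {n : ℕ}

lemma sum_coordGrad_mul (f : (Fin n → ℝ) → ℝ) (x v : Fin n → ℝ) :
    ∑ i, coordGrad f x i * v i = fderiv ℝ f x v := by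
  conv_rhs => rw [← Finset.univ_sum_single v]
  rw [map_sum]
  refine Finset.sum_congr rfl fun i _ => ?_
  rw [coordGrad, basisVec, mul_comm, ← smul_eq_mul, ← map_smul, ← Pi.single_smul', smul_eq_mul,
    mul_one]

lemma CoordSmooth.le_add_smul_basisVec {f : (Fin n → ℝ) → ℝ} {L : Fin n → ℝ}
    (hsmooth : CoordSmooth f L) (hf : Differentiable ℝ f) (x : Fin n → ℝ) (i : Fin n) (t : ℝ) :
    f (x + t • basisVec i) ≤ f x + coordGrad f x i * t + L i / 2 * t ^ 2 := by
  have hline : ∀ s : ℝ, HasDerivAt (fun s => x + s • basisVec i) (basisVec i) s := fun s => by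
    simpa using ((hasDerivAt_id s).smul_const (basisVec i)).const_add x
  simpa using le_add_mul_add_sq_of_abs_deriv_sub_le
    (g := fun s => f (x + s • basisVec i)) (g' := fun s => coordGrad f (x + s • basisVec i) i)
    (fun s => (hf _).hasFDerivAt.comp_hasDerivAt s (hline s))
    (fun u => by simpa using hsmooth x u i) t

lemma CoordSmooth.apply_sub_coordGrad_step_le {f : (Fin n → ℝ) → ℝ} {L : Fin n → ℝ}
    (hsmooth : CoordSmooth f L) (hf : Differentiable ℝ f) (x : Fin n → ℝ) {i : Fin n}
    (hLi : L i ≠ 0) :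
    f (x - (1 / L i * coordGrad f x i) • basisVec i) ≤ f x - coordGrad f x i ^ 2 / (2 * L i) := by
  have := hsmooth.le_add_smul_basisVec hf x i (-(1 / L i * coordGrad f x i))
  rw [neg_smul, ← sub_eq_add_neg] at this
  exact this.trans_eq (by field_simp; ring)

section WeightedNorm

variable {L : Fin n → ℝ} {β : ℝ}

lemma wnormSq_nonneg (hL : ∀ i, 0 ≤ L i) (v : Fin n → ℝ) : 0 ≤ wnormSq L β v :=
  sum_nonneg fun i _ => mul_nonneg (Real.rpow_nonneg (hL i) β) (sq_nonneg _)

lemma wnormSq_sub_comm (u v : Fin n → ℝ) : wnormSq L β (u - v) = wnormSq L β (v - u) := by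
  simp only [wnormSq, Pi.sub_apply, sub_sq_comm]

lemma wnormSq_smul_add_smul {a b : ℝ} (hab : a + b = 1) (u v : Fin n → ℝ) :
    wnormSq L β (a • u + b • v)
      = a * wnormSq L β u + b * wnormSq L β v - a * b * wnormSq L β (u - v) := by
  obtain rfl : b = 1 - a := by linarith
  simp only [wnormSq, mul_sum, ← sum_add_distrib, ← sum_sub_distrib]
  refine sum_congr rfl fun i _ => ?_
  simp only [Pi.add_apply, Pi.sub_apply, Pi.smul_apply, smul_eq_mul]
  ring

lemma wnormSq_sub_smul_basisVec (v : Fin n → ℝ) (c : ℝ) (i : Fin n) :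
    wnormSq L β (v - c • basisVec i)
      = wnormSq L β v - 2 * c * L i ^ β * v i + c ^ 2 * L i ^ β := by
  have hterm : ∀ j, L j ^ β * (v - c • basisVec i) j ^ 2 = L j ^ β * v j ^ 2
      + (Pi.single i (c ^ 2 * L i ^ β - 2 * c * L i ^ β * v i) : Fin n → ℝ) j := by
    intro j
    rcases eq_or_ne j i with rfl | hji
    · simp only [basisVec, Pi.sub_apply, Pi.smul_apply, Pi.single_eq_same, smul_eq_mul, mul_one]
      ring
    · simp [basisVec, hji]
  simp only [wnormSq, hterm, sum_add_distrib, Fintype.sum_pi_single']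
  ring

lemma sum_mul_wnormSq_sub_smul_basisVec {p : Fin n → ℝ} (hp : ∑ i, p i = 1)
    (hpL : ∀ i, p i * L i ^ β ≠ 0) (g v : Fin n → ℝ) (γ : ℝ) :
    ∑ i, p i * wnormSq L β (v - (γ / (p i * L i ^ β) * g i) • basisVec i)
      = wnormSq L β v - 2 * γ * ∑ i, g i * v i + γ ^ 2 * ∑ i, g i ^ 2 / (p i * L i ^ β) := by
  have hterm : ∀ i, p i * wnormSq L β (v - (γ / (p i * L i ^ β) * g i) • basisVec i)
      = p i * wnormSq L β v - 2 * γ * (g i * v i) + γ ^ 2 * (g i ^ 2 / (p i * L i ^ β)) := by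
    intro i
    have hp : p i ≠ 0 := left_ne_zero_of_mul (hpL i)
    have hN : L i ^ β ≠ 0 := right_ne_zero_of_mul (hpL i)
    rw [wnormSq_sub_smul_basisVec]
    field_simp
  simp only [hterm, sum_add_distrib, sum_sub_distrib, ← mul_sum, ← sum_mul, hp, one_mul]

end WeightedNorm

lemma mul_mul_le_add_of_mul_eq_sq_mul {p L N η τ g d : ℝ} (hη : 0 < η) (hL : 0 < L)
    (hp₀ : 0 < p) (hp₁ : p ≤ 1) (h : τ * η * L = p ^ 2 * N) :
    τ * (g * d) ≤ p * (g ^ 2 / (2 * L)) + τ / (2 * η) * (N * d ^ 2) := by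
  have key : p * (g ^ 2 / (2 * L)) + τ / (2 * η) * (N * d ^ 2) - τ * (g * d)
      = p / (2 * L) * ((g - p * N * d / η) ^ 2 + (p - p ^ 2) * (N * d / η) ^ 2) := by
    field_simp
    linear_combination (N * d ^ 2 - 2 * η * g * d) * h
  have : 0 ≤ p / (2 * L) * ((g - p * N * d / η) ^ 2 + (p - p ^ 2) * (N * d / η) ^ 2) := by
    have : 0 ≤ p - p ^ 2 := by nlinarith
    positivity
  linarith

section Contraction

variable {f : (Fin n → ℝ) → ℝ} {L : Fin n → ℝ} {β σ : ℝ}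

lemma StronglyConvexW.fderiv_le (hsc : StronglyConvexW f L β σ) (x y : Fin n → ℝ) :
    f x + fderiv ℝ f x (y - x) + σ / 2 * wnormSq L β (y - x) ≤ f y := by
  have h := sum_coordGrad_mul f x (y - x)
  simp only [Pi.sub_apply] at h
  simpa only [h] using hsc x y

lemma StronglyConvexW.add_fderiv_le (hsc : StronglyConvexW f L β σ) (hσ : 0 ≤ σ)
    (hL : ∀ i, 0 ≤ L i) (x y : Fin n → ℝ) : f x + fderiv ℝ f x (y - x) ≤ f y := by
  have := hsc.fderiv_le x y
  have := mul_nonneg (by positivity : 0 ≤ σ / 2) (wnormSq_nonneg (β := β) hL (y - x))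
  linarith

lemma mul_sum_mul_wnormSq_mirror_step_eq (hL : ∀ i, 0 < L i) {p : Fin n → ℝ} (hp : ∀ i, 0 < p i)
    (hp_sum : ∑ i, p i = 1) {τ η : ℝ} (hτ₁ : τ < 1) (hη : 0 < η) (hησ : η * σ * (1 - τ) = τ)
    (hpL : ∀ i, τ * η * L i = p i ^ 2 * L i ^ β) (xstar z x : Fin n → ℝ) {Z : Fin n → Fin n → ℝ}
    (hZ : ∀ i, Z i = (1 / (1 + η * σ)) •
      (z + (η * σ) • x - (η / (p i * L i ^ β) * coordGrad f x i) • basisVec i)) :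
    τ / (2 * η * (1 - τ)) * ∑ i, p i * wnormSq L β (Z i - xstar)
      = τ / (2 * η) * wnormSq L β (z - xstar) + τ * (σ / 2) * wnormSq L β (x - xstar)
        - τ * (τ / (2 * η)) * wnormSq L β (z - x)
        - τ * ((1 - τ) * fderiv ℝ f x (z - x) + fderiv ℝ f x (x - xstar))
        + (1 - τ) * ∑ i, p i * (coordGrad f x i ^ 2 / (2 * L i)) := by
  have hN : ∀ i, 0 < L i ^ β := fun i => Real.rpow_pos_of_pos (hL i) β
  have hτ' : 1 - τ ≠ 0 := (sub_pos.2 hτ₁).ne'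
  have hσ : σ = τ / (η * (1 - τ)) := by
    rw [eq_div_iff (by positivity)]; linear_combination hησ
  set v := (1 - τ) • (z - xstar) + τ • (x - xstar)
  have hZv : ∀ i, Z i - xstar
      = v - ((1 - τ) * η / (p i * L i ^ β) * coordGrad f x i) • basisVec i := by
    intro i
    have hinv : 1 / (1 + η * σ) = 1 - τ := by
      rw [div_eq_iff (by nlinarith)]; linear_combination -hησ
    ext j
    simp only [hZ i, hinv, v, Pi.sub_apply, Pi.add_apply, Pi.smul_apply, smul_eq_mul]
    linear_combination x j * hησ
  have hv : wnormSq L β v = (1 - τ) * wnormSq L β (z - xstar) + τ * wnormSq L β (x - xstar)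
      - (1 - τ) * τ * wnormSq L β (z - x) := by
    rw [wnormSq_smul_add_smul (by ring), sub_sub_sub_cancel_right]
  have hgv : ∑ i, coordGrad f x i * v i
      = (1 - τ) * fderiv ℝ f x (z - x) + fderiv ℝ f x (x - xstar) := by
    rw [sum_coordGrad_mul, show v = (1 - τ) • (z - x) + (x - xstar) by module]
    simp
  have hgg : ∑ i, p i * (coordGrad f x i ^ 2 / (2 * L i))
      = τ * η * (∑ i, coordGrad f x i ^ 2 / (p i * L i ^ β)) / 2 := by
    rw [mul_sum, sum_div]
    refine sum_congr rfl fun i _ => ?_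
    have := (hL i).ne'
    have := (hp i).ne'
    have := (hN i).ne'
    field_simp
    linear_combination -coordGrad f x i ^ 2 * hpL i
  simp only [hZv, sum_mul_wnormSq_sub_smul_basisVec hp_sum (fun i => (mul_pos (hp i) (hN i)).ne'),
    hv, hgv, hgg, hσ]
  field_simp

theorem sum_mul_potential_le (hf : Differentiable ℝ f) (hL : ∀ i, 0 < L i)
    (hsmooth : CoordSmooth f L) (hsc : StronglyConvexW f L β σ) (xstar : Fin n → ℝ)
    {p : Fin n → ℝ} (hp : ∀ i, 0 < p i) (hp_sum : ∑ i, p i = 1)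
    {τ η : ℝ} (hτ₀ : 0 < τ) (hτ₁ : τ < 1) (hη : 0 < η) (hησ : η * σ * (1 - τ) = τ)
    (hpL : ∀ i, τ * η * L i = p i ^ 2 * L i ^ β)
    {y z x : Fin n → ℝ} (hx : x = τ • z + (1 - τ) • y) {Y Z : Fin n → Fin n → ℝ}
    (hY : ∀ i, Y i = x - (1 / L i * coordGrad f x i) • basisVec i)
    (hZ : ∀ i, Z i = (1 / (1 + η * σ)) •
      (z + (η * σ) • x - (η / (p i * L i ^ β) * coordGrad f x i) • basisVec i)) :
    ∑ i, p i * ((f (Y i) - f xstar) + τ / (2 * η * (1 - τ)) * wnormSq L β (Z i - xstar))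
      ≤ (1 - τ) * ((f y - f xstar) + τ / (2 * η * (1 - τ)) * wnormSq L β (z - xstar)) := by
  set Df := fderiv ℝ f x
  set Q := ∑ i, p i * (coordGrad f x i ^ 2 / (2 * L i))
  have hσ₀ : 0 ≤ σ := by nlinarith [mul_pos hη (sub_pos.2 hτ₁)]
  have hdescent : ∑ i, p i * f (Y i) ≤ f x - Q := by
    calc ∑ i, p i * f (Y i) ≤ ∑ i, p i * (f x - coordGrad f x i ^ 2 / (2 * L i)) := by
          refine sum_le_sum fun i _ => mul_le_mul_of_nonneg_left ?_ (hp i).le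
          rw [hY i]
          exact hsmooth.apply_sub_coordGrad_step_le hf x (hL i).ne'
      _ = f x - Q := by simp only [mul_sub, sum_sub_distrib, ← sum_mul, hp_sum, one_mul]; rfl
  have hconvex : f x + Df (y - x) ≤ f y := hsc.add_fderiv_le hσ₀ (fun i => (hL i).le) x y
  have hstar := hsc.fderiv_le x xstar
  rw [wnormSq_sub_comm, ← neg_sub, map_neg] at hstar
  have hcoupling : τ * Df (z - x) + (1 - τ) * Df (y - x) = 0 := by
    have : τ • (z - x) + (1 - τ) • (y - x) = 0 := by rw [hx]; module
    simpa using congrArg Df this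
  have hyoung : τ * Df (z - x) ≤ Q + τ / (2 * η) * wnormSq L β (z - x) := by
    rw [← sum_coordGrad_mul, mul_sum, wnormSq, mul_sum, ← sum_add_distrib]
    exact sum_le_sum fun i _ => mul_mul_le_add_of_mul_eq_sq_mul hη (hL i) (hp i)
      (hp_sum ▸ single_le_sum (fun j _ => (hp j).le) (mem_univ i)) (hpL i)
  have hmirror := mul_sum_mul_wnormSq_mirror_step_eq hL hp hp_sum hτ₁ hη hησ hpL xstar z x hZ
  have hc : (1 - τ) * (τ / (2 * η * (1 - τ))) = τ / (2 * η) := by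
    field_simp [(sub_pos.2 hτ₁).ne']
  have hexpect : ∑ i, p i * ((f (Y i) - f xstar)
        + τ / (2 * η * (1 - τ)) * wnormSq L β (Z i - xstar))
      = ∑ i, p i * f (Y i) - f xstar
        + τ / (2 * η * (1 - τ)) * ∑ i, p i * wnormSq L β (Z i - xstar) := by
    simp only [mul_add, mul_sub, sum_add_distrib, sum_sub_distrib, ← sum_mul, hp_sum, one_mul,
      mul_sum, mul_left_comm (p _)]
  rw [hexpect, hmirror, mul_add _ (f y - f xstar), ← mul_assoc, hc]
  linear_combination hdescent + (1 - τ) * hconvex + τ * hstar + τ * hyoung - hcoupling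

end Contraction

lemma mul_one_sub_eq_sq_mul_sq {σ S τ : ℝ} (hσ : 0 < σ)
    (hτ : τ = 2 / (1 + √(4 * S ^ 2 / σ + 1))) : σ * (1 - τ) = τ ^ 2 * S ^ 2 := by
  have hr : σ * √(4 * S ^ 2 / σ + 1) ^ 2 = 4 * S ^ 2 + σ := by
    rw [Real.sq_sqrt (by positivity)]; field_simp
  have : 0 < 1 + √(4 * S ^ 2 / σ + 1) := by positivity
  generalize √(4 * S ^ 2 / σ + 1) = r at *
  subst hτ
  field_simp
  linear_combination hr

theorem stmt_6_general (n : ℕ) (f : (Fin n → ℝ) → ℝ) (L : Fin n → ℝ)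
    (hf : Differentiable ℝ f) (hL : ∀ i, 0 < L i)
    (hsmooth : CoordSmooth f L)
    (β σβ : ℝ) (hσ : 0 < σβ)
    (hsc : StronglyConvexW f L β σβ)
    (xstar : Fin n → ℝ)
    (α Sα : ℝ) (hα : α = (1 - β) / 2) (hS : Sα = ∑ i, L i ^ α)
    (p : Fin n → ℝ) (hp : ∀ i, p i = L i ^ α / Sα)
    (τ η : ℝ) (hτ : τ = 2 / (1 + Real.sqrt (4 * Sα ^ 2 / σβ + 1)))
    (hη : η = 1 / (τ * Sα ^ 2))
    (yk zk xk1 : Fin n → ℝ) (hx : xk1 = τ • zk + (1 - τ) • yk)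
    (Y Z : Fin n → Fin n → ℝ)
    (hY : ∀ i, Y i = xk1 - (1 / L i * coordGrad f xk1 i) • basisVec i)
    (hZ : ∀ i, Z i = (1 / (1 + η * σβ)) •
      (zk + (η * σβ) • xk1 - (η / (p i * L i ^ β) * coordGrad f xk1 i) • basisVec i)) :
    ∑ i, p i * ((f (Y i) - f xstar)
        + τ / (2 * η * (1 - τ)) * wnormSq L β (Z i - xstar))
      ≤ (1 - τ) * ((f yk - f xstar)
        + τ / (2 * η * (1 - τ)) * wnormSq L β (zk - xstar)) := by
  rcases isEmpty_or_nonempty (Fin n) with hn | hn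
  -- `Sα = 0` gives `τ = 1`, and both sides vanish
  · have : τ = 1 := by norm_num [hτ, hS]
    simp [this]
  have hLα : ∀ i, 0 < L i ^ α := fun i => Real.rpow_pos_of_pos (hL i) α
  have hS₀ : 0 < Sα := hS ▸ sum_pos (fun i _ => hLα i) univ_nonempty
  have hτS := mul_one_sub_eq_sq_mul_sq hσ hτ
  have hτ₀ : 0 < τ := hτ ▸ by positivity
  have hτ₁ : τ < 1 := by nlinarith [mul_pos (pow_pos hτ₀ 2) (pow_pos hS₀ 2)]
  have hησ : η * σβ * (1 - τ) = τ := by rw [mul_assoc, hτS, hη]; field_simp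
  have hpL : ∀ i, τ * η * L i = p i ^ 2 * L i ^ β := fun i => by
    rw [hp, hη]
    field_simp
    rw [sq, ← Real.rpow_add (hL i), ← Real.rpow_add (hL i), show α + α + β = 1 by rw [hα]; ring,
      Real.rpow_one]
  refine sum_mul_potential_le hf hL hsmooth hsc xstar (fun i => hp i ▸ div_pos (hLα i) hS₀)
    ?_ hτ₀ hτ₁ (hη ▸ by positivity) hησ hpL hx hY hZ
  simp only [hp, ← sum_div, ← hS, div_self hS₀.ne']

/-- One-step contraction of NU_ACDM: the expected potential
`(f(y) − f(x*)) + (τ/(2η(1−τ)))‖z − x*‖²_{L_β}` contracts by a factor `1 − τ`. -/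
theorem stmt_6 (n : ℕ) (f : (Fin n → ℝ) → ℝ) (L : Fin n → ℝ)
    (hf : Differentiable ℝ f) (hconv : ConvexOn ℝ Set.univ f) (hL : ∀ i, 0 < L i)
    (hsmooth : CoordSmooth f L)
    (β σβ : ℝ) (hβ : β ∈ Set.Icc (0 : ℝ) 1) (hσ : 0 < σβ)
    (hsc : StronglyConvexW f L β σβ)
    (xstar : Fin n → ℝ) (hxstar : ∀ v, f xstar ≤ f v)
    (α Sα : ℝ) (hα : α = (1 - β) / 2) (hS : Sα = ∑ i, L i ^ α)
    (p : Fin n → ℝ) (hp : ∀ i, p i = L i ^ α / Sα)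
    (τ η : ℝ) (hτ : τ = 2 / (1 + Real.sqrt (4 * Sα ^ 2 / σβ + 1)))
    (hη : η = 1 / (τ * Sα ^ 2))
    (yk zk xk1 : Fin n → ℝ) (hx : xk1 = τ • zk + (1 - τ) • yk)
    (Y Z : Fin n → Fin n → ℝ)
    (hY : ∀ i, Y i = xk1 - (1 / L i * coordGrad f xk1 i) • basisVec i)
    (hZ : ∀ i, Z i = (1 / (1 + η * σβ)) •
      (zk + (η * σβ) • xk1 - (η / (p i * L i ^ β) * coordGrad f xk1 i) • basisVec i)) :
    ∑ i, p i * ((f (Y i) - f xstar)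
        + τ / (2 * η * (1 - τ)) * wnormSq L β (Z i - xstar))
      ≤ (1 - τ) * ((f yk - f xstar)
        + τ / (2 * η * (1 - τ)) * wnormSq L β (zk - xstar)) :=
  stmt_6_general n f L hf hL hsmooth β σβ hσ hsc xstar α Sα hα hS p hp τ η hτ hη yk zk xk1 hx Y Z hY
    hZ
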